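/- arXiv:1710.08165 — 2 statements merged into one kernel-verified Lean document; each statement's English description precedes it below -/
import Mathlib

section
/- (Cross-ratio lower bound by the Vaidya local norm) For all points x, y in the interior of the bounded polytope K, the cross-ratio satisfies d_K(x, y) ≥ ‖x − y‖_{V_x} / √(2d). -/
open Matrix MeasureTheory Real Set
open scoped ENNReal

noncomputable section

namespace PolytopeWalks

/-- Slackness `s_{x,i} = b_i − a_i^⊤ x`. -/
def slack {d m : ℕ} (A : Matrix (Fin m) (Fin d) ℝ) (b : Fin m → ℝ) (x : Fin d → ℝ)
    (i : Fin m) : ℝ :=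
  b i - A.mulVec x i

/-- The polytope `K = {x : A x ≤ b}`. -/
def poly {d m : ℕ} (A : Matrix (Fin m) (Fin d) ℝ) (b : Fin m → ℝ) : Set (Fin d → ℝ) :=
  {x | ∀ i, A.mulVec x i ≤ b i}

/-- The interior of the polytope: all slacks positive. -/
def interiorPoly {d m : ℕ} (A : Matrix (Fin m) (Fin d) ℝ) (b : Fin m → ℝ) :
    Set (Fin d → ℝ) :=
  {x | ∀ i, 0 < slack A b x i}

/-- Hessian of the logarithmic barrier, `∇²F_x = Σ_i a_i a_i^⊤ / s_{x,i}²`. -/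
def logHess {d m : ℕ} (A : Matrix (Fin m) (Fin d) ℝ) (b : Fin m → ℝ) (x : Fin d → ℝ) :
    Matrix (Fin d) (Fin d) ℝ :=
  ∑ i : Fin m, ((slack A b x i) ^ 2)⁻¹ • vecMulVec (A i) (A i)

/-- Leverage scores `σ_{x,i} = a_i^⊤ (∇²F_x)⁻¹ a_i / s_{x,i}²`. -/
def lev {d m : ℕ} (A : Matrix (Fin m) (Fin d) ℝ) (b : Fin m → ℝ) (x : Fin d → ℝ)
    (i : Fin m) : ℝ :=
  (A i) ⬝ᵥ ((logHess A b x)⁻¹ *ᵥ (A i)) / (slack A b x i) ^ 2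

/-- The Vaidya matrix `V_x = Σ_i (σ_{x,i} + d/m) a_i a_i^⊤ / s_{x,i}²`. -/
def vaidyaMat {d m : ℕ} (A : Matrix (Fin m) (Fin d) ℝ) (b : Fin m → ℝ) (x : Fin d → ℝ) :
    Matrix (Fin d) (Fin d) ℝ :=
  ∑ i : Fin m, ((lev A b x i + (d : ℝ) / m) / (slack A b x i) ^ 2) • vecMulVec (A i) (A i)

/-- Vaidya local norm `‖v‖_{V_x} = (v^⊤ V_x v)^{1/2}`. -/
def vNorm {d m : ℕ} (A : Matrix (Fin m) (Fin d) ℝ) (b : Fin m → ℝ) (x v : Fin d → ℝ) : ℝ :=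
  Real.sqrt (v ⬝ᵥ (vaidyaMat A b x *ᵥ v))

/-- Vaidya slack sensitivities `θ_{x,i} = a_i^⊤ V_x⁻¹ a_i / s_{x,i}²`. -/
def thetaV {d m : ℕ} (A : Matrix (Fin m) (Fin d) ℝ) (b : Fin m → ℝ) (x : Fin d → ℝ)
    (i : Fin m) : ℝ :=
  (A i) ⬝ᵥ ((vaidyaMat A b x)⁻¹ *ᵥ (A i)) / (slack A b x i) ^ 2

/-- The Euclidean norm on `Fin d → ℝ`. -/
def enorm2 {d : ℕ} (v : Fin d → ℝ) : ℝ := Real.sqrt (∑ i, v i ^ 2)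

/-- Largest chord parameter: `sSup {t : x + t(y−x) ∈ closure K}`; `x + t₊(y−x)` is the
chord endpoint `e(y)` beyond `y`. -/
def chordSup {d : ℕ} (K : Set (Fin d → ℝ)) (x y : Fin d → ℝ) : ℝ :=
  sSup {t : ℝ | x + t • (y - x) ∈ closure K}

/-- Smallest chord parameter: `sInf {t : x + t(y−x) ∈ closure K}`; `x + t₋(y−x)` is the
chord endpoint `e(x)` beyond `x`. -/
def chordInf {d : ℕ} (K : Set (Fin d → ℝ)) (x y : Fin d → ℝ) : ℝ :=
  sInf {t : ℝ | x + t • (y - x) ∈ closure K}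

/-- The cross-ratio `d_K(x,y) = ‖e(x)−e(y)‖₂‖x−y‖₂ / (‖e(x)−x‖₂‖e(y)−y‖₂)`, where
`e(x), x, y, e(y)` lie in this order on the chord through `x` and `y`. -/
def crossRatio {d : ℕ} (K : Set (Fin d → ℝ)) (x y : Fin d → ℝ) : ℝ :=
  enorm2 ((x + chordInf K x y • (y - x)) - (x + chordSup K x y • (y - x))) *
      enorm2 (x - y) /
    (enorm2 ((x + chordInf K x y • (y - x)) - x) *
      enorm2 ((x + chordSup K x y • (y - x)) - y))

open Filter Topology

/-!
Parametrise the chord through `x` and `y` as `t ↦ x + t • (y - x)`, so that `e(x), x, y, e(y)`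
sit at `t₋ < 0 < 1 < t₊` and `d_K(x,y) = (t₊ - t₋) / ((-t₋)(t₊ - 1))`. Both endpoints satisfy
every constraint, so `|a_i ⬝ (y - x)| ≤ s_{x,i} max(1/t₊, 1/(-t₋)) ≤ s_{x,i} d_K(x,y)`.
Weighting these bounds by `(σ_{x,i} + β) / s_{x,i}²` gives
`‖x - y‖²_{V_x} ≤ (∑ σ_{x,i} + mβ) d_K(x,y)² = 2d d_K(x,y)²`, since the leverage scores sum to
`rank A = d`.
-/

section LinearAlgebra

variable {d m : ℕ}

lemma dotProduct_sum_smul_vecMulVec_mulVec (A : Matrix (Fin m) (Fin d) ℝ) (w : Fin m → ℝ)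
    (v : Fin d → ℝ) :
    v ⬝ᵥ ((∑ i, w i • vecMulVec (A i) (A i)) *ᵥ v) = ∑ i, w i * (A i ⬝ᵥ v) ^ 2 := by
  simp only [sum_mulVec, dotProduct_sum, smul_mulVec, vecMulVec_mulVec, dotProduct_smul]
  refine Finset.sum_congr rfl fun i _ => ?_
  simp [dotProduct_comm v, sq]

lemma mulVec_injective_of_rank_eq {ι κ K : Type*} [Fintype κ] [Field K] {A : Matrix ι κ K}
    (hrank : A.rank = Fintype.card κ) : Function.Injective A.mulVec := by
  have h := LinearMap.finrank_range_add_finrank_ker A.mulVecLin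
  rw [← Matrix.rank, hrank, Module.finrank_fintype_fun_eq_card, add_eq_left,
    Submodule.finrank_eq_zero, LinearMap.ker_eq_bot] at h
  exact h

end LinearAlgebra

section Vaidya

variable {d m : ℕ} {A : Matrix (Fin m) (Fin d) ℝ} {b : Fin m → ℝ} {x : Fin d → ℝ}

lemma logHess_posDef (hrank : A.rank = d) (hx : x ∈ interiorPoly A b) :
    (logHess A b x).PosDef := by
  have hpsd : (logHess A b x).PosSemidef := posSemidef_sum _ fun i _ =>
    (show (vecMulVec (A i) (A i)).PosSemidef by
      simpa using posSemidef_vecMulVec_self_star (A i)).smul (by positivity)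
  refine .of_dotProduct_mulVec_pos hpsd.isHermitian fun v hv => ?_
  obtain ⟨i, hi⟩ : ∃ i, A i ⬝ᵥ v ≠ 0 := Function.ne_iff.1
    ((mulVec_injective_of_rank_eq (by simpa using hrank)).ne hv |>.trans_eq (mulVec_zero A))
  rw [star_trivial, logHess, dotProduct_sum_smul_vecMulVec_mulVec]
  exact Finset.sum_pos' (fun j _ => by positivity)
    ⟨i, Finset.mem_univ i, by have := (hx i).ne'; positivity⟩

lemma lev_nonneg (hrank : A.rank = d) (hx : x ∈ interiorPoly A b) (i : Fin m) :
    0 ≤ lev A b x i :=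
  div_nonneg
    (by simpa using (logHess_posDef hrank hx).inv.posSemidef.dotProduct_mulVec_nonneg (A i))
    (sq_nonneg _)

lemma sum_lev (hrank : A.rank = d) (hx : x ∈ interiorPoly A b) :
    ∑ i, lev A b x i = d := by
  have hH : IsUnit (logHess A b x).det := (logHess_posDef hrank hx).det_pos.ne'.isUnit
  calc ∑ i, lev A b x i
      = ∑ i, trace ((logHess A b x)⁻¹ * ((slack A b x i ^ 2)⁻¹ • vecMulVec (A i) (A i))) := by
        refine Finset.sum_congr rfl fun i _ => ?_
        rw [Matrix.mul_smul, trace_smul, mul_vecMulVec, trace_vecMulVec, dotProduct_comm, lev,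
          smul_eq_mul, div_eq_inv_mul]
    _ = trace ((logHess A b x)⁻¹ * logHess A b x) := by
        rw [logHess, Finset.mul_sum, trace_sum]
    _ = d := by simp [nonsing_inv_mul _ hH]

lemma sum_lev_add_le (hrank : A.rank = d) (hx : x ∈ interiorPoly A b) :
    ∑ i, (lev A b x i + (d : ℝ) / m) ≤ 2 * d := by
  have hβ : ∑ _i : Fin m, (d : ℝ) / m ≤ d := by
    rcases eq_or_ne (m : ℝ) 0 with hm | hm
    · simp [hm]
    · simp [mul_div_cancel₀ _ hm]
  rw [Finset.sum_add_distrib, sum_lev hrank hx]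
  linarith

lemma quadForm_vaidyaMat_le (hrank : A.rank = d) (hx : x ∈ interiorPoly A b) {v : Fin d → ℝ}
    {D : ℝ} (hv : ∀ i, |A i ⬝ᵥ v| ≤ slack A b x i * D) :
    v ⬝ᵥ (vaidyaMat A b x *ᵥ v) ≤ 2 * d * D ^ 2 := by
  rw [vaidyaMat, dotProduct_sum_smul_vecMulVec_mulVec]
  calc ∑ i, (lev A b x i + (d : ℝ) / m) / slack A b x i ^ 2 * (A i ⬝ᵥ v) ^ 2
      ≤ ∑ i, (lev A b x i + (d : ℝ) / m) * D ^ 2 := by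
        refine Finset.sum_le_sum fun i _ => ?_
        have hs := hx i
        have hw : 0 ≤ lev A b x i + (d : ℝ) / m := by
          have := lev_nonneg hrank hx i; positivity
        have hsq : (A i ⬝ᵥ v) ^ 2 ≤ slack A b x i ^ 2 * D ^ 2 := by
          rw [← sq_abs, ← mul_pow]
          exact pow_le_pow_left₀ (abs_nonneg _) (hv i) 2
        calc (lev A b x i + (d : ℝ) / m) / slack A b x i ^ 2 * (A i ⬝ᵥ v) ^ 2
            ≤ (lev A b x i + (d : ℝ) / m) / slack A b x i ^ 2 *
                (slack A b x i ^ 2 * D ^ 2) := by gcongr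
          _ = (lev A b x i + (d : ℝ) / m) * D ^ 2 := by field_simp
    _ = (∑ i, (lev A b x i + (d : ℝ) / m)) * D ^ 2 := by rw [Finset.sum_mul]
    _ ≤ 2 * d * D ^ 2 := by gcongr; exact sum_lev_add_le hrank hx

lemma vNorm_le (hrank : A.rank = d) (hx : x ∈ interiorPoly A b) {v : Fin d → ℝ} {D : ℝ}
    (hD : 0 ≤ D) (hv : ∀ i, |A i ⬝ᵥ v| ≤ slack A b x i * D) :
    vNorm A b x v ≤ √(2 * d) * D := by
  rw [vNorm, ← sqrt_sq hD, ← sqrt_mul (by positivity)]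
  exact sqrt_le_sqrt (quadForm_vaidyaMat_le hrank hx hv)

end Vaidya

lemma enorm2_smul {d : ℕ} (c : ℝ) (v : Fin d → ℝ) : enorm2 (c • v) = |c| * enorm2 v := by
  simp only [enorm2, Pi.smul_apply, smul_eq_mul, mul_pow, ← Finset.mul_sum]
  rw [sqrt_mul (sq_nonneg c), sqrt_sq_eq_abs]

lemma enorm2_pos {d : ℕ} {v : Fin d → ℝ} (hv : v ≠ 0) : 0 < enorm2 v := by
  obtain ⟨i, hi⟩ := Function.ne_iff.1 hv
  exact sqrt_pos.2 <|
    Finset.sum_pos' (fun j _ => sq_nonneg _) ⟨i, Finset.mem_univ i, sq_pos_of_ne_zero hi⟩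

/-- The cross-ratio of the points `tm, 0, 1, tp` of the real line. -/
def paramCrossRatio (tm tp : ℝ) : ℝ := (tp - tm) / (-tm * (tp - 1))

lemma abs_le_mul_paramCrossRatio {tm tp c s : ℝ} (htm : tm < 0) (htp : 1 < tp) (hs : 0 ≤ s)
    (hcp : tp * c ≤ s) (hcm : tm * c ≤ s) : |c| ≤ s * paramCrossRatio tm tp := by
  have hm : 0 < -tm := neg_pos.2 htm
  have hp : 0 < tp - 1 := sub_pos.2 htp
  rw [paramCrossRatio, mul_div_assoc', le_div_iff₀ (by positivity)]
  rcases le_total 0 c with hc | hc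
  · rw [abs_of_nonneg hc]
    nlinarith [mul_le_mul_of_nonneg_left hcp hm.le]
  · rw [abs_of_nonpos hc]
    nlinarith [mul_le_mul_of_nonneg_right hcm hp.le]

section Chord

variable {d : ℕ} {K : Set (Fin d → ℝ)} {x y : Fin d → ℝ}

def chordParams (K : Set (Fin d → ℝ)) (x y : Fin d → ℝ) : Set ℝ :=
  (fun t : ℝ => x + t • (y - x)) ⁻¹' closure K

lemma isClosed_chordParams : IsClosed (chordParams K x y) :=
  isClosed_closure.preimage (by fun_prop)

lemma isBounded_chordParams (hK : Bornology.IsBounded K) (hxy : x ≠ y) :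
    Bornology.IsBounded (chordParams K x y) := by
  have hv : 0 < ‖y - x‖ := norm_pos_iff.2 (sub_ne_zero.2 hxy.symm)
  refine (AntilipschitzWith.of_le_mul_dist (K := ‖y - x‖₊⁻¹) fun s t => ?_).isBounded_preimage
    hK.closure
  rw [dist_add_left, dist_eq_norm (s • _), ← sub_smul, norm_smul, ← dist_eq_norm, NNReal.coe_inv,
    coe_nnnorm, mul_comm, mul_inv_cancel_right₀ hv.ne']

lemma chordInf_lt_zero (hx : x ∈ interior K) (hbdd : BddBelow (chordParams K x y)) :
    chordInf K x y < 0 := by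
  have hline : Tendsto (fun t : ℝ => x + t • (y - x)) (𝓝 0) (𝓝 x) :=
    (by fun_prop : Continuous fun t : ℝ => x + t • (y - x)).tendsto' 0 x (by simp)
  obtain ⟨t, ht, hmem⟩ := (hline.eventually_mem (mem_interior_iff_mem_nhds.1 hx)).exists_lt
  exact (csInf_le hbdd (subset_closure hmem)).trans_lt ht

lemma one_lt_chordSup (hy : y ∈ interior K) (hbdd : BddAbove (chordParams K x y)) :
    1 < chordSup K x y := by
  have hline : Tendsto (fun t : ℝ => x + t • (y - x)) (𝓝 1) (𝓝 y) :=
    (by fun_prop : Continuous fun t : ℝ => x + t • (y - x)).tendsto' 1 y (by simp)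
  obtain ⟨t, ht, hmem⟩ := (hline.eventually_mem (mem_interior_iff_mem_nhds.1 hy)).exists_gt
  exact ht.trans_le (le_csSup hbdd (subset_closure hmem))

lemma zero_mem_chordParams (hx : x ∈ K) : (0 : ℝ) ∈ chordParams K x y := by
  simpa [chordParams] using subset_closure hx

lemma chordSup_mem_closure (hK : Bornology.IsBounded K) (hx : x ∈ K) (hxy : x ≠ y) :
    x + chordSup K x y • (y - x) ∈ closure K :=
  isClosed_chordParams.csSup_mem ⟨0, zero_mem_chordParams hx⟩
    (isBounded_chordParams hK hxy).bddAbove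

lemma chordInf_mem_closure (hK : Bornology.IsBounded K) (hx : x ∈ K) (hxy : x ≠ y) :
    x + chordInf K x y • (y - x) ∈ closure K :=
  isClosed_chordParams.csInf_mem ⟨0, zero_mem_chordParams hx⟩
    (isBounded_chordParams hK hxy).bddBelow

lemma crossRatio_nonneg : 0 ≤ crossRatio K x y := by
  unfold crossRatio enorm2
  positivity

lemma crossRatio_eq_paramCrossRatio (hxy : x ≠ y) (htm : chordInf K x y ≤ 0)
    (htp : 1 ≤ chordSup K x y) :
    crossRatio K x y = paramCrossRatio (chordInf K x y) (chordSup K x y) := by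
  set tm := chordInf K x y
  set tp := chordSup K x y
  have hN : 0 < enorm2 (y - x) := enorm2_pos (sub_ne_zero.2 hxy.symm)
  have e1 : x + tm • (y - x) - (x + tp • (y - x)) = (tm - tp) • (y - x) := by module
  have e2 : x - y = (-1 : ℝ) • (y - x) := by module
  have e3 : x + tm • (y - x) - x = tm • (y - x) := by module
  have e4 : x + tp • (y - x) - y = (tp - 1) • (y - x) := by module
  rw [crossRatio, e1, e2, e3, e4, enorm2_smul, enorm2_smul, enorm2_smul, enorm2_smul,
    abs_of_nonpos (by linarith : tm - tp ≤ 0), abs_of_nonpos htm,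
    abs_of_nonneg (by linarith : (0 : ℝ) ≤ tp - 1), abs_neg, abs_one, paramCrossRatio]
  field_simp
  ring

end Chord

section Polytope

variable {d m : ℕ} {A : Matrix (Fin m) (Fin d) ℝ} {b : Fin m → ℝ} {x y : Fin d → ℝ}

lemma isClosed_poly : IsClosed (poly A b) := by
  simp only [poly, ofPred_forall]
  exact isClosed_iInter fun i => isClosed_le (by fun_prop) continuous_const

lemma interiorPoly_subset_interior : interiorPoly A b ⊆ interior (poly A b) := by
  refine interior_maximal (fun z hz i => (sub_pos.1 (hz i)).le) ?_
  simp only [interiorPoly, slack, ofPred_forall]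
  exact isOpen_iInter_of_finite fun i => isOpen_lt continuous_const (by fun_prop)

lemma add_smul_mem_poly_iff (t : ℝ) (v : Fin d → ℝ) :
    x + t • v ∈ poly A b ↔ ∀ i, t * (A i ⬝ᵥ v) ≤ slack A b x i := by
  simp only [poly, slack, mem_ofPred_eq, mulVec_add, mulVec_smul, Pi.add_apply, Pi.smul_apply,
    smul_eq_mul]
  exact forall_congr' fun i => by rw [le_sub_iff_add_le']; rfl

lemma abs_dotProduct_le_slack_mul_crossRatio (hbd : Bornology.IsBounded (poly A b))
    (hx : x ∈ interiorPoly A b) (hy : y ∈ interiorPoly A b) (i : Fin m) :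
    |A i ⬝ᵥ (x - y)| ≤ slack A b x i * crossRatio (poly A b) x y := by
  obtain rfl | hxy := eq_or_ne x y
  · simpa using mul_nonneg (hx i).le crossRatio_nonneg
  have hbdd := isBounded_chordParams hbd hxy
  have htm := chordInf_lt_zero (interiorPoly_subset_interior hx) hbdd.bddBelow
  have htp := one_lt_chordSup (interiorPoly_subset_interior hy) hbdd.bddAbove
  have hx' : x ∈ poly A b := interior_subset (interiorPoly_subset_interior hx)
  have hinf := chordInf_mem_closure hbd hx' hxy
  have hsup := chordSup_mem_closure hbd hx' hxy
  rw [isClosed_poly.closure_eq, add_smul_mem_poly_iff] at hinf hsup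
  rw [crossRatio_eq_paramCrossRatio hxy htm.le htp.le, ← abs_neg, ← dotProduct_neg, neg_sub]
  exact abs_le_mul_paramCrossRatio htm htp (hx i).le (hsup i) (hinf i)

end Polytope

theorem cross_ratio_lower_bound_general (d m : ℕ)
    (A : Matrix (Fin m) (Fin d) ℝ) (b : Fin m → ℝ) (hrank : A.rank = d)
    (hbd : Bornology.IsBounded (poly A b))
    (x y : Fin d → ℝ) (hx : x ∈ interiorPoly A b) (hy : y ∈ interiorPoly A b) :
    vNorm A b x (x - y) / Real.sqrt (2 * d) ≤ crossRatio (poly A b) x y := by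
  refine div_le_of_le_mul₀ (sqrt_nonneg _) crossRatio_nonneg ?_
  rw [mul_comm]
  exact vNorm_le hrank hx crossRatio_nonneg
    (abs_dotProduct_le_slack_mul_crossRatio hbd hx hy)

/-- Cross-ratio lower bound by the Vaidya local norm: for all interior points `x, y` of
the bounded polytope `K`, `d_K(x,y) ≥ ‖x−y‖_{V_x}/√(2d)`. -/
theorem cross_ratio_lower_bound (d m : ℕ) (hd : 0 < d) (hdm : d ≤ m)
    (A : Matrix (Fin m) (Fin d) ℝ) (b : Fin m → ℝ) (hrank : A.rank = d)
    (hbd : Bornology.IsBounded (poly A b))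
    (x y : Fin d → ℝ) (hx : x ∈ interiorPoly A b) (hy : y ∈ interiorPoly A b) :
    vNorm A b x (x - y) / Real.sqrt (2 * d) ≤ crossRatio (poly A b) x y :=
  cross_ratio_lower_bound_general d m A b hrank hbd x y hx hy

end PolytopeWalks
end
end

section
/- (Lemma: weighted PSD bound for the John weight-derivative operator) Let x be in the interior of K and let w be a positive vector satisfying the John fixed-point equations at x. Define G = diag(w), Λ = Σ_{x,w} − P_{x,w}^{(2)}, and κ = (1−α)^{-1} = log₂(2m/d). Then for any scalars c₁, c₂ ≥ 0, (c₁ I_m + c₂ Λ (G − αΛ)^{-1}) G (c₁ I_m + c₂ (G − αΛ)^{-1} Λ) ⪯ (c₁ + c₂)² κ² G, where ⪯ denotes the positive-semidefinite order. -/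
open Matrix MeasureTheory Real Set
open scoped ENNReal

noncomputable section

namespace PolytopeWalks

/-- Rescaled constraint matrix `A_x = S_x⁻¹ A`. -/
def Amat {d m : ℕ} (A : Matrix (Fin m) (Fin d) ℝ) (b : Fin m → ℝ) (x : Fin d → ℝ) :
    Matrix (Fin m) (Fin d) ℝ :=
  Matrix.of fun i j => A i j / slack A b x i

/-- The projection matrix `P_x = A_x (A_x^⊤ A_x)⁻¹ A_x^⊤` onto the column space of `A_x`. -/
def projMat {d m : ℕ} (A : Matrix (Fin m) (Fin d) ℝ) (b : Fin m → ℝ) (x : Fin d → ℝ) :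
    Matrix (Fin m) (Fin m) ℝ :=
  Amat A b x * (logHess A b x)⁻¹ * (Amat A b x)ᵀ

/-- Entrywise (Hadamard) square of a matrix. -/
def hadSq {n : ℕ} (M : Matrix (Fin n) (Fin n) ℝ) : Matrix (Fin n) (Fin n) ℝ :=
  Matrix.of fun i j => (M i j) ^ 2

/-- `κ = log₂(2m/d)`. -/
def kappaJ (d m : ℕ) : ℝ := Real.logb 2 ((2 * m : ℝ) / d)

/-- `α = 1 − 1/log₂(2m/d)`. -/
def alphaJ (d m : ℕ) : ℝ := 1 - 1 / Real.logb 2 ((2 * m : ℝ) / d)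

/-- `β_J = d/(2m)`. -/
def betaJ (d m : ℕ) : ℝ := (d : ℝ) / (2 * m)

/-- The weighted projection matrix
`P_{x,w} = W^{α/2} A_x (A_x^⊤ W^α A_x)⁻¹ A_x^⊤ W^{α/2}`. -/
def johnProj {d m : ℕ} (A : Matrix (Fin m) (Fin d) ℝ) (b : Fin m → ℝ) (x : Fin d → ℝ)
    (w : Fin m → ℝ) : Matrix (Fin m) (Fin m) ℝ :=
  Matrix.diagonal (fun i => w i ^ (alphaJ d m / 2)) * Amat A b x *
    ((Amat A b x)ᵀ * Matrix.diagonal (fun i => w i ^ alphaJ d m) * Amat A b x)⁻¹ *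
    (Amat A b x)ᵀ * Matrix.diagonal (fun i => w i ^ (alphaJ d m / 2))

/-- `w` is a positive solution of the John fixed-point equations
`w_i = (P_{x,w})_{ii} + β_J` at `x`. -/
def IsJohnWeight {d m : ℕ} (A : Matrix (Fin m) (Fin d) ℝ) (b : Fin m → ℝ) (x : Fin d → ℝ)
    (w : Fin m → ℝ) : Prop :=
  (∀ i, 0 < w i) ∧ ∀ i, w i = johnProj A b x w i i + betaJ d m

/-- The John matrix `J_x = Σ_i w_i a_i a_i^⊤ / s_{x,i}²` built from weights `w`. -/
def johnMat {d m : ℕ} (A : Matrix (Fin m) (Fin d) ℝ) (b : Fin m → ℝ) (x : Fin d → ℝ)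
    (w : Fin m → ℝ) : Matrix (Fin d) (Fin d) ℝ :=
  ∑ i : Fin m, (w i / (slack A b x i) ^ 2) • vecMulVec (A i) (A i)

/-- The diagonal matrix `G = diag(w)`. -/
def Gmat {m : ℕ} (w : Fin m → ℝ) : Matrix (Fin m) (Fin m) ℝ := Matrix.diagonal w

/-- `Λ = Σ_{x,w} − P_{x,w}^{(2)}`: diagonal of the weighted projection minus its
Hadamard square. -/
def lamMat {d m : ℕ} (A : Matrix (Fin m) (Fin d) ℝ) (b : Fin m → ℝ) (x : Fin d → ℝ)
    (w : Fin m → ℝ) : Matrix (Fin m) (Fin m) ℝ :=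
  Matrix.diagonal (fun i => johnProj A b x w i i) - hadSq (johnProj A b x w)

/-!
Write `G = S²` with `S = G^{1/2}` and put `M = S⁻¹ Λ S⁻¹`. Conjugation by `S` turns the operator
into `(c₁ + c₂ M (1 - αM)⁻¹)(c₁ + c₂ (1 - αM)⁻¹ M) = f(M)²` with `f(t) = c₁ + c₂ t / (1 - αt)`.
Since `P = P_{x,w}` is a symmetric idempotent, `P_ii = Σ_j P_ij²`, so `Λ` is the Laplacian of the
weights `P_ij² ≥ 0` and `0 ⪯ Λ`; the fixed-point equations give `G - Λ = β_J I + P ∘ P ⪰ 0` by the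
Schur product theorem. Hence `0 ⪯ M ⪯ I`, and on `[0, 1]` we have
`0 ≤ f ≤ (c₁ + c₂) / (1 - α) = (c₁ + c₂) κ`.
-/

end PolytopeWalks

theorem add_mul_mul_inv_one_sub_mem_Icc {α c₁ c₂ t : ℝ} (hα0 : 0 ≤ α) (hα1 : α < 1) (hc₁ : 0 ≤ c₁)
    (hc₂ : 0 ≤ c₂) (ht0 : 0 ≤ t) (ht1 : t ≤ 1) :
    c₁ + c₂ * (t * (1 - α * t)⁻¹) ∈ Set.Icc 0 ((c₁ + c₂) / (1 - α)) := by
  have hpos : 0 < 1 - α * t := by nlinarith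
  have h1α : 0 < 1 - α := by linarith
  have hres : t * (1 - α * t)⁻¹ ≤ (1 - α)⁻¹ := by
    rw [← div_eq_mul_inv, div_le_iff₀ hpos, inv_mul_eq_div, le_div_iff₀ h1α]
    nlinarith
  have hκ : 1 ≤ (1 - α)⁻¹ := by rw [le_inv_comm₀ one_pos h1α]; linarith
  refine ⟨by positivity, ?_⟩
  rw [div_eq_mul_inv]
  nlinarith

namespace Matrix

section Rank

variable {m n K : Type*} [Fintype n] [Field K]

theorem mulVec_injective_of_rank_eq_card {A : Matrix m n K} (h : A.rank = Fintype.card n) :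
    Function.Injective A.mulVec := by
  have hker := LinearMap.finrank_range_add_finrank_ker A.mulVecLin
  rw [← Matrix.rank, h, Module.finrank_fintype_fun_eq_card, add_eq_left,
    Submodule.finrank_eq_zero] at hker
  exact LinearMap.ker_eq_bot.mp hker

theorem mulVec_injective_diagonal_mul [Fintype m] [DecidableEq m] {u : m → K} (hu : ∀ i, u i ≠ 0)
    {A : Matrix m n K} (hA : Function.Injective A.mulVec) :
    Function.Injective (diagonal u * A).mulVec := by
  have hD : Function.Injective (diagonal u).mulVec :=
    mulVec_injective_iff_isUnit.mpr (isUnit_diagonal.mpr (Pi.isUnit_iff.mpr fun i => (hu i).isUnit))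
  have hcomp : (diagonal u * A).mulVec = (diagonal u).mulVec ∘ A.mulVec :=
    funext fun v => (mulVec_mulVec v _ _).symm
  exact hcomp ▸ hD.comp hA

end Rank

section ColProj

variable {m n R : Type*} [Fintype m] [Fintype n] [DecidableEq n] [CommRing R]

noncomputable def colProj (B : Matrix m n R) : Matrix m m R :=
  B * (Bᵀ * B)⁻¹ * Bᵀ

theorem colProj_isSymm (B : Matrix m n R) : (colProj B).IsSymm := by
  simp only [IsSymm, colProj, transpose_mul, transpose_nonsing_inv, transpose_transpose,
    Matrix.mul_assoc]

theorem colProj_mul_self {B : Matrix m n R} (hB : IsUnit (Bᵀ * B).det) :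
    colProj B * colProj B = colProj B := by
  rw [colProj]
  calc _ = B * (Bᵀ * B)⁻¹ * (Bᵀ * B) * (Bᵀ * B)⁻¹ * Bᵀ := by simp only [Matrix.mul_assoc]
    _ = _ := by rw [nonsing_inv_mul_cancel_right _ _ hB]

theorem isUnit_det_transpose_mul_self {B : Matrix m n ℝ} (hB : Function.Injective B.mulVec) :
    IsUnit (Bᵀ * B).det := by
  have hpos := PosDef.conjTranspose_mul_self B hB
  rw [conjTranspose_eq_transpose_of_trivial] at hpos
  exact hpos.det_pos.ne'.isUnit

end ColProj

section SymmIdempotent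

variable {n : Type*} [Fintype n]

theorem IsSymm.posSemidef_of_mul_self {P : Matrix n n ℝ} (hP : P.IsSymm) (hPP : P * P = P) :
    P.PosSemidef := by
  simpa only [conjTranspose_eq_transpose_of_trivial, hP.eq, hPP] using
    posSemidef_conjTranspose_mul_self P

theorem IsSymm.apply_self_eq_sum_sq_of_mul_self {P : Matrix n n ℝ} (hP : P.IsSymm)
    (hPP : P * P = P) (i : n) : P i i = ∑ j, P i j ^ 2 := by
  conv_lhs => rw [← hPP, mul_apply]
  exact Finset.sum_congr rfl fun j _ => by rw [hP.apply, sq]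

theorem posSemidef_diagonal_sum_sub [DecidableEq n] {W : Matrix n n ℝ} (hW : W.IsSymm)
    (hW0 : ∀ i j, 0 ≤ W i j) : (diagonal (fun i => ∑ j, W i j) - W).PosSemidef := by
  refine .of_dotProduct_mulVec_nonneg ?_ fun v => ?_
  · exact isHermitian_iff_isSymm.mpr ((isDiag_diagonal _).isSymm.sub hW)
  have hq : star v ⬝ᵥ ((diagonal (fun i => ∑ j, W i j) - W) *ᵥ v) =
      ∑ i, ∑ j, W i j * (v i * (v i - v j)) := by
    rw [star_trivial, sub_mulVec, dotProduct_sub]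
    simp only [dotProduct, mulVec_diagonal]
    simp only [mulVec, dotProduct, Finset.mul_sum, Finset.sum_mul, ← Finset.sum_sub_distrib]
    exact Finset.sum_congr rfl fun i _ => Finset.sum_congr rfl fun j _ => by ring
  have hswap : ∑ i, ∑ j, W i j * (v i * (v i - v j)) =
      ∑ i, ∑ j, W i j * (v j * (v j - v i)) := by
    rw [Finset.sum_comm]
    simp_rw [hW.apply]
  have hsq : ∑ i, ∑ j, W i j * (v i * (v i - v j)) + ∑ i, ∑ j, W i j * (v j * (v j - v i)) =
      ∑ i, ∑ j, W i j * (v i - v j) ^ 2 := by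
    simp only [← Finset.sum_add_distrib]
    exact Finset.sum_congr rfl fun i _ => Finset.sum_congr rfl fun j _ => by ring
  have hnonneg : 0 ≤ ∑ i, ∑ j, W i j * (v i - v j) ^ 2 :=
    Finset.sum_nonneg fun i _ => Finset.sum_nonneg fun j _ => mul_nonneg (hW0 i j) (sq_nonneg _)
  linarith

end SymmIdempotent

section WeightDerivForm

open scoped MatrixOrder

variable {n : Type*} [Fintype n] [DecidableEq n]

noncomputable def weightDerivForm {R : Type*} [CommRing R] (G Λ : Matrix n n R) (α c₁ c₂ : R) :
    Matrix n n R :=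
  (c₁ • 1 + c₂ • (Λ * (G - α • Λ)⁻¹)) * G * (c₁ • 1 + c₂ • ((G - α • Λ)⁻¹ * Λ))

theorem weightDerivForm_mul_self_conj {R : Type*} [CommRing R] {S : Matrix n n R}
    (hS : IsUnit S.det) (M : Matrix n n R) (α c₁ c₂ : R) :
    weightDerivForm (S * S) (S * M * S) α c₁ c₂ = S * weightDerivForm 1 M α c₁ c₂ * S := by
  have hinv : (S * S - α • (S * M * S))⁻¹ = S⁻¹ * (1 - α • M)⁻¹ * S⁻¹ := by
    rw [show S * S - α • (S * M * S) = S * (1 - α • M) * S by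
      simp only [Matrix.mul_sub, Matrix.sub_mul, Matrix.mul_one, Matrix.mul_smul, Matrix.smul_mul],
      Matrix.mul_inv_rev, Matrix.mul_inv_rev, Matrix.mul_assoc]
  rw [weightDerivForm, weightDerivForm, hinv]
  simp only [Matrix.mul_add, Matrix.add_mul, Matrix.mul_smul, Matrix.smul_mul, Matrix.mul_one,
    Matrix.one_mul, Matrix.mul_assoc, mul_nonsing_inv_cancel_left _ _ hS,
    nonsing_inv_mul_cancel_left _ _ hS]

theorem inv_one_sub_smul_eq_cfc {M : Matrix n n ℝ} (hM : IsSelfAdjoint M) {α : ℝ}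
    (h : ∀ t ∈ spectrum ℝ M, 1 - α * t ≠ 0) :
    (1 - α • M)⁻¹ = cfc (fun t => (1 - α * t)⁻¹) M := by
  have hcfc : (1 : Matrix n n ℝ) - α • M = cfc (fun t => 1 - α * t) M := by
    rw [cfc_sub .., cfc_const_one .., cfc_const_mul_id ..]
  refine Matrix.inv_eq_right_inv ?_
  rw [hcfc, ← cfc_mul .., ← cfc_one ℝ M]
  exact cfc_congr fun t ht => mul_inv_cancel₀ (h t ht)

theorem weightDerivForm_one_le {M : Matrix n n ℝ} (hM0 : 0 ≤ M) (hM1 : M ≤ 1)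
    {α c₁ c₂ : ℝ} (hα0 : 0 ≤ α) (hα1 : α < 1) (hc₁ : 0 ≤ c₁) (hc₂ : 0 ≤ c₂) :
    weightDerivForm 1 M α c₁ c₂ ≤ ((c₁ + c₂) / (1 - α)) ^ 2 • (1 : Matrix n n ℝ) := by
  have hsa : IsSelfAdjoint M := IsSelfAdjoint.of_nonneg hM0
  have hcont (g : ℝ → ℝ) : ContinuousOn g (spectrum ℝ M) :=
    (Matrix.finite_spectrum M).continuousOn g
  have hspec : ∀ t ∈ spectrum ℝ M, 0 ≤ t ∧ t ≤ 1 := fun t ht =>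
    ⟨spectrum_nonneg_of_nonneg hM0 ht, (CFC.le_one_iff M).mp hM1 t ht⟩
  have hR := inv_one_sub_smul_eq_cfc hsa (α := α) fun t ht => by
    have := hspec t ht
    nlinarith
  have hX : c₁ • 1 + c₂ • (M * (1 - α • M)⁻¹) =
      cfc (fun t => c₁ + c₂ * (t * (1 - α * t)⁻¹)) M := by
    rw [hR, cfc_add _ _ _ (hcont _) (hcont _), cfc_const .., cfc_const_mul _ _ _ (hcont _),
      cfc_mul _ _ _ (hcont _) (hcont _), cfc_id' .., Algebra.algebraMap_eq_smul_one]
  have hcomm : (1 - α • M)⁻¹ * M = M * (1 - α • M)⁻¹ := by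
    simpa only [hR, cfc_id ℝ M] using (cfc_commute_cfc (fun t => (1 - α * t)⁻¹) id M).eq
  rw [weightDerivForm, Matrix.mul_one, hcomm, hX, ← cfc_mul _ _ _ (hcont _) (hcont _),
    ← Algebra.algebraMap_eq_smul_one]
  refine cfc_le_algebraMap _ _ M (fun t ht => ?_) (hcont _)
  obtain ⟨h0, h1⟩ := add_mul_mul_inv_one_sub_mem_Icc hα0 hα1 hc₁ hc₂ (hspec t ht).1 (hspec t ht).2
  rw [← sq]
  exact pow_le_pow_left₀ h0 h1 2

theorem weightDerivForm_le {G Λ : Matrix n n ℝ} (hG : G.PosDef) (hΛ : 0 ≤ Λ) (hΛG : Λ ≤ G)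
    {α c₁ c₂ : ℝ} (hα0 : 0 ≤ α) (hα1 : α < 1) (hc₁ : 0 ≤ c₁) (hc₂ : 0 ≤ c₂) :
    weightDerivForm G Λ α c₁ c₂ ≤ ((c₁ + c₂) / (1 - α)) ^ 2 • G := by
  set S := CFC.sqrt G
  have hSS : S * S = G := CFC.sqrt_mul_sqrt_self G hG.posSemidef.nonneg
  have hSstar : star S = S := (CFC.sqrt_nonneg G).isSelfAdjoint.star_eq
  have hSdet : IsUnit S.det := (isUnit_iff_isUnit_det S).mp
    ((CFC.isUnit_sqrt_iff G hG.posSemidef.nonneg).mpr hG.isUnit)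
  have hSinv : star S⁻¹ = S⁻¹ := by
    rw [star_eq_conjTranspose, conjTranspose_nonsing_inv, ← star_eq_conjTranspose, hSstar]
  set M := S⁻¹ * Λ * S⁻¹
  have hΛM : Λ = S * M * S := by
    simp only [M, Matrix.mul_assoc, mul_nonsing_inv_cancel_left _ _ hSdet,
      nonsing_inv_mul_cancel_right _ _ hSdet]
  have hM0 : 0 ≤ M := by
    have := star_left_conjugate_nonneg hΛ S⁻¹
    rwa [hSinv] at this
  have hM1 : M ≤ 1 := by
    have := star_left_conjugate_le_conjugate hΛG S⁻¹
    rwa [hSinv, ← hSS, nonsing_inv_mul_cancel_left _ _ hSdet, mul_nonsing_inv _ hSdet] at this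
  have key := star_left_conjugate_le_conjugate (weightDerivForm_one_le hM0 hM1 hα0 hα1 hc₁ hc₂) S
  rwa [hSstar, ← weightDerivForm_mul_self_conj hSdet, Matrix.mul_smul, Matrix.mul_one,
    Matrix.smul_mul, hSS, ← hΛM] at key

end WeightDerivForm

end Matrix

namespace PolytopeWalks

theorem one_le_kappaJ {d m : ℕ} (hd : 0 < d) (hdm : d ≤ m) : 1 ≤ kappaJ d m := by
  have h2 : (2 : ℝ) ≤ 2 * m / d := by
    rw [le_div_iff₀ (Nat.cast_pos.mpr hd)]
    have : (d : ℝ) ≤ m := Nat.cast_le.mpr hdm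
    linarith
  simpa [kappaJ, Real.logb_self_eq_one one_lt_two] using
    Real.logb_le_logb_of_le (b := 2) one_lt_two (by norm_num) h2

theorem kappaJ_eq_inv_one_sub_alphaJ (d m : ℕ) : kappaJ d m = (1 - alphaJ d m)⁻¹ := by
  rw [kappaJ, alphaJ, sub_sub_cancel, one_div, inv_inv]

theorem alphaJ_mem_Ico {d m : ℕ} (hd : 0 < d) (hdm : d ≤ m) : alphaJ d m ∈ Set.Ico 0 1 := by
  have hκ := one_le_kappaJ hd hdm
  have hα : alphaJ d m = 1 - (kappaJ d m)⁻¹ := by rw [alphaJ, kappaJ, one_div]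
  rw [hα]
  exact ⟨sub_nonneg.mpr (inv_le_one_of_one_le₀ hκ), sub_lt_self _ (by positivity)⟩

section JohnProj

variable {d m : ℕ} {A : Matrix (Fin m) (Fin d) ℝ} {b : Fin m → ℝ} {x : Fin d → ℝ}
  {w : Fin m → ℝ}

theorem Amat_eq_diagonal_mul (A : Matrix (Fin m) (Fin d) ℝ) (b : Fin m → ℝ) (x : Fin d → ℝ) :
    Amat A b x = diagonal (fun i => (slack A b x i)⁻¹) * A := by
  ext i j
  rw [Amat, of_apply, diagonal_mul, div_eq_inv_mul]

theorem johnProj_eq_colProj (hw : ∀ i, 0 < w i) :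
    johnProj A b x w = colProj (diagonal (fun i => w i ^ (alphaJ d m / 2)) * Amat A b x) := by
  have hD : diagonal (fun i => w i ^ (alphaJ d m / 2)) * diagonal (fun i => w i ^ (alphaJ d m / 2))
      = diagonal (fun i => w i ^ alphaJ d m) := by
    rw [diagonal_mul_diagonal]
    exact congrArg diagonal (funext fun i => by rw [← Real.rpow_add (hw i), add_halves])
  rw [colProj, transpose_mul, diagonal_transpose, Matrix.mul_assoc (Amat A b x)ᵀ,
    ← Matrix.mul_assoc (diagonal _) (diagonal _), hD]
  simp only [johnProj, Matrix.mul_assoc]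

theorem mulVec_injective_diagonal_rpow_mul_Amat (hrank : A.rank = d) (hx : x ∈ interiorPoly A b)
    (hw : ∀ i, 0 < w i) :
    Function.Injective (diagonal (fun i => w i ^ (alphaJ d m / 2)) * Amat A b x).mulVec := by
  rw [Amat_eq_diagonal_mul]
  refine mulVec_injective_diagonal_mul (fun i => (Real.rpow_pos_of_pos (hw i) _).ne') ?_
  refine mulVec_injective_diagonal_mul (fun i => inv_ne_zero (hx i).ne') ?_
  exact mulVec_injective_of_rank_eq_card (by rw [hrank, Fintype.card_fin])

theorem johnProj_isSymm (hw : ∀ i, 0 < w i) : (johnProj A b x w).IsSymm :=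
  johnProj_eq_colProj hw ▸ colProj_isSymm _

theorem johnProj_mul_self (hrank : A.rank = d) (hx : x ∈ interiorPoly A b) (hw : ∀ i, 0 < w i) :
    johnProj A b x w * johnProj A b x w = johnProj A b x w := by
  rw [johnProj_eq_colProj hw]
  exact colProj_mul_self
    (isUnit_det_transpose_mul_self (mulVec_injective_diagonal_rpow_mul_Amat hrank hx hw))

theorem hadSq_eq_hadamard {n : ℕ} (M : Matrix (Fin n) (Fin n) ℝ) : hadSq M = M ⊙ M := by
  ext i j
  rw [hadSq, of_apply, hadamard_apply, sq]

theorem lamMat_posSemidef (hrank : A.rank = d) (hx : x ∈ interiorPoly A b) (hw : ∀ i, 0 < w i) :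
    (lamMat A b x w).PosSemidef := by
  have hP := johnProj_isSymm (A := A) (b := b) (x := x) hw
  have hPP := johnProj_mul_self hrank hx hw
  have hlap : lamMat A b x w = diagonal (fun i => ∑ j, (johnProj A b x w ⊙ johnProj A b x w) i j)
      - johnProj A b x w ⊙ johnProj A b x w := by
    rw [lamMat, hadSq_eq_hadamard]
    refine congrArg (· - _) (congrArg diagonal (funext fun i => ?_))
    simp only [hP.apply_self_eq_sum_sq_of_mul_self hPP i, hadamard_apply, sq]
  have hPsq := (hP.posSemidef_of_mul_self hPP).hadamard (hP.posSemidef_of_mul_self hPP)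
  rw [hlap]
  exact posSemidef_diagonal_sum_sub (isHermitian_iff_isSymm.mp hPsq.isHermitian)
    fun i j => mul_self_nonneg _

theorem Gmat_sub_lamMat_posSemidef (hrank : A.rank = d) (hx : x ∈ interiorPoly A b)
    (hw : IsJohnWeight A b x w) : (Gmat w - lamMat A b x w).PosSemidef := by
  have hP := johnProj_isSymm (A := A) (b := b) (x := x) hw.1
  have hPpsd := hP.posSemidef_of_mul_self (johnProj_mul_self hrank hx hw.1)
  have hfix : Gmat w - lamMat A b x w =
      Matrix.diagonal (fun _ => betaJ d m) + johnProj A b x w ⊙ johnProj A b x w := by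
    rw [Gmat, lamMat, hadSq_eq_hadamard, sub_sub_eq_add_sub, add_sub_right_comm, diagonal_sub]
    exact congrArg (· + _) (congrArg diagonal (funext fun i => by rw [hw.2 i, add_sub_cancel_left]))
  rw [hfix]
  have hβ : 0 ≤ betaJ d m := by unfold betaJ; positivity
  exact (posSemidef_diagonal_iff.mpr fun _ => hβ).add (hPpsd.hadamard hPpsd)

end JohnProj

/-- Weighted PSD bound for the John weight-derivative operator: for `c₁, c₂ ≥ 0`,
`(c₁I + c₂Λ(G−αΛ)⁻¹) G (c₁I + c₂(G−αΛ)⁻¹Λ) ⪯ (c₁+c₂)²κ² G`. -/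
theorem john_weight_derivative_psd_bound (d m : ℕ) (hd : 0 < d) (hdm : d ≤ m)
    (A : Matrix (Fin m) (Fin d) ℝ) (b : Fin m → ℝ) (hrank : A.rank = d)
    (x : Fin d → ℝ) (hx : x ∈ interiorPoly A b)
    (w : Fin m → ℝ) (hw : IsJohnWeight A b x w)
    (c₁ c₂ : ℝ) (hc₁ : 0 ≤ c₁) (hc₂ : 0 ≤ c₂) :
    (((c₁ + c₂) ^ 2 * kappaJ d m ^ 2) • Gmat w -
      (c₁ • (1 : Matrix (Fin m) (Fin m) ℝ) +
          c₂ • (lamMat A b x w * (Gmat w - alphaJ d m • lamMat A b x w)⁻¹)) *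
        Gmat w *
      (c₁ • (1 : Matrix (Fin m) (Fin m) ℝ) +
          c₂ • ((Gmat w - alphaJ d m • lamMat A b x w)⁻¹ * lamMat A b x w))).PosSemidef := by
  obtain ⟨hα0, hα1⟩ := alphaJ_mem_Ico hd hdm
  have hG : (Gmat w).PosDef := posDef_diagonal_iff.mpr hw.1
  have hbound := weightDerivForm_le hG (lamMat_posSemidef hrank hx hw.1).nonneg
    (le_iff.mpr (Gmat_sub_lamMat_posSemidef hrank hx hw)) hα0 hα1 hc₁ hc₂
  rw [kappaJ_eq_inv_one_sub_alphaJ, ← mul_pow, ← div_eq_mul_inv]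
  exact hbound

end PolytopeWalks
end
end
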